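/- arXiv:1411.2368 — 11 statements merged into one kernel-verified Lean document; each statement's English description precedes it below -/
import Mathlib

section
/- For real numbers $v_0 \ge 0$, $v_6 \ge 0$, $v_1$, the binary sextic form $\hat f(x_1,x_2) = v_0 x_1^6 + 6 v_1 x_1^5 x_2 + v_6 x_2^6$ is nonnegative for all $(x_1,x_2) \in \mathbb{R}^2$ if and only if $|v_1| \le (v_0/5)^{5/6} v_6^{1/6}$. -/
/-!
Write `v0 = 5 p⁶` and `v6 = q⁶` with `p, q ≥ 0`. Sufficiency is the weighted AM-GM inequality
`6 x⁵ y ≤ 5 x⁶ + y⁶`, applied to `x = p |x1|`, `y = q |x2|`. For necessity, choose the sign of `x2`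
against that of `v1`: then `6 |v1| s⁵ t ≤ 5 p⁶ s⁶ + q⁶ t⁶` for all `s, t ≥ 0`, and the AM-GM equality
point `(s, t) = (q, p)` gives `|v1| ≤ p⁵ q` when `p, q > 0`. The degenerate cases follow by letting
`p, q` decrease to their limits, since the hypothesis only gets weaker as `p` and `q` grow.
-/

open Filter Topology

theorem six_mul_pow_five_mul_le_of_nonneg {x y : ℝ} (hx : 0 ≤ x) (hy : 0 ≤ y) :
    6 * x ^ 5 * y ≤ 5 * x ^ 6 + y ^ 6 := by
  have hQ : 0 ≤ 5 * x ^ 4 + 4 * x ^ 3 * y + 3 * x ^ 2 * y ^ 2 + 2 * x * y ^ 3 + y ^ 4 := by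
    positivity
  nlinarith [mul_nonneg (sq_nonneg (x - y)) hQ]

theorem le_of_forall_six_mul_pow_five_mul_le_of_pos {k p q : ℝ} (hp : 0 < p) (hq : 0 < q)
    (h : ∀ s t : ℝ, 0 ≤ s → 0 ≤ t → 6 * k * s ^ 5 * t ≤ 5 * p ^ 6 * s ^ 6 + q ^ 6 * t ^ 6) :
    k ≤ p ^ 5 * q := by
  have hqp := h q p hq.le hp.le
  refine le_of_mul_le_mul_right ?_ (by positivity : 0 < q ^ 5 * p)
  linarith

theorem le_of_forall_six_mul_pow_five_mul_le {k p q : ℝ} (hp : 0 ≤ p) (hq : 0 ≤ q)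
    (h : ∀ s t : ℝ, 0 ≤ s → 0 ≤ t → 6 * k * s ^ 5 * t ≤ 5 * p ^ 6 * s ^ 6 + q ^ 6 * t ^ 6) :
    k ≤ p ^ 5 * q := by
  have h_shift : ∀ ε ∈ Set.Ioi (0 : ℝ), k ≤ (p + ε) ^ 5 * (q + ε) := fun ε (hε : 0 < ε) ↦
    le_of_forall_six_mul_pow_five_mul_le_of_pos (by positivity) (by positivity)
      fun s t hs ht ↦ (h s t hs ht).trans (by gcongr <;> linarith)
  have h_lim : Tendsto (fun ε : ℝ ↦ (p + ε) ^ 5 * (q + ε)) (𝓝[>] 0) (𝓝 ((p + 0) ^ 5 * (q + 0))) :=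
    ((by fun_prop : Continuous fun ε : ℝ ↦ (p + ε) ^ 5 * (q + ε)).tendsto 0).mono_left
      nhdsWithin_le_nhds
  simpa using ge_of_tendsto h_lim (eventually_nhdsWithin_of_forall h_shift)

theorem sextic_nonneg_iff (v1 : ℝ) {p q : ℝ} (hp : 0 ≤ p) (hq : 0 ≤ q) :
    (∀ x1 x2 : ℝ, 0 ≤ 5 * p ^ 6 * x1 ^ 6 + 6 * v1 * x1 ^ 5 * x2 + q ^ 6 * x2 ^ 6) ↔
      |v1| ≤ p ^ 5 * q := by
  constructor
  · intro h
    refine le_of_forall_six_mul_pow_five_mul_le hp hq fun s t _ _ ↦ ?_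
    rcases abs_cases v1 with ⟨hv1, -⟩ | ⟨hv1, -⟩
    · have := h s (-t)
      rw [hv1]
      linarith [show (-t) ^ 6 = t ^ 6 by ring]
    · have := h s t
      rw [hv1]
      linarith
  · intro h x1 x2
    have h_amgm := six_mul_pow_five_mul_le_of_nonneg
      (mul_nonneg hp (abs_nonneg x1)) (mul_nonneg hq (abs_nonneg x2))
    have h_cross : |v1 * x1 ^ 5 * x2| ≤ p ^ 5 * q * (|x1| ^ 5 * |x2|) := by
      rw [abs_mul, abs_mul, abs_pow, mul_assoc]
      gcongr
    have h_even : ∀ x : ℝ, |x| ^ 6 = x ^ 6 := (Even.pow_abs ⟨3, rfl⟩ ·)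
    rw [mul_pow, mul_pow, mul_pow, h_even, h_even] at h_amgm
    nlinarith [neg_abs_le (v1 * x1 ^ 5 * x2)]

theorem stmt_0 (v0 v1 v6 : ℝ) (hv0 : 0 ≤ v0) (hv6 : 0 ≤ v6) :
    (∀ x1 x2 : ℝ, 0 ≤ v0 * x1 ^ 6 + 6 * v1 * x1 ^ 5 * x2 + v6 * x2 ^ 6) ↔
      |v1| ≤ (v0 / 5) ^ ((5 : ℝ) / 6) * v6 ^ ((1 : ℝ) / 6) := by
  have hv0' : 0 ≤ v0 / 5 := by positivity
  have h_root : ∀ {x : ℝ} (n : ℕ), 0 ≤ x → (x ^ ((1 : ℝ) / 6)) ^ n = x ^ ((n : ℝ) / 6) :=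
    fun n hx ↦ by rw [← Real.rpow_mul_natCast hx]; ring_nf
  have h0 : 5 * ((v0 / 5) ^ ((1 : ℝ) / 6)) ^ 6 = v0 := by
    rw [h_root 6 hv0']; norm_num; ring
  have h5 : ((v0 / 5) ^ ((1 : ℝ) / 6)) ^ 5 = (v0 / 5) ^ ((5 : ℝ) / 6) := by
    rw [h_root 5 hv0']; norm_num
  have h6 : (v6 ^ ((1 : ℝ) / 6)) ^ 6 = v6 := by
    rw [h_root 6 hv6]; norm_num
  simpa only [h0, h5, h6] using
    sextic_nonneg_iff v1 (Real.rpow_nonneg hv0' (1 / 6)) (Real.rpow_nonneg hv6 (1 / 6))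
end

section
/- If $v_0, v_6, v_{12} \ge 0$ and $\sqrt{v_0 v_{12}} \ge (560 + 70\sqrt{70}) v_6$, then the polynomial $f(x_1,x_2,x_3) = v_0 x_1^6 + v_6(x_2^6 + 30 x_1 x_2^4 x_3 + 90 x_1^2 x_2^2 x_3^2 + 20 x_1^3 x_3^3) + v_{12} x_3^6$ is nonnegative for all $(x_1,x_2,x_3) \in \mathbb{R}^3$. -/
/-!
Substituting `u = x₂²` and `t = x₁x₃`, the `v₆`-part of `f` is the binary cubic
`u³ + 30tu² + 90t²u + 20t³`. For `u ≥ 0` it is bounded below by `-(1120 + 140√70)|t|³`: for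
`t ≥ 0` all terms are nonnegative, and for `t = -s < 0` the shifted cubic factors as
`(u - (10 + √70)s)² (u + (2√70 - 10)s)` with a nonnegative second factor since `√70 ≥ 5`.
The missing `(1120 + 140√70) v₆ |t|³` is supplied by AM-GM,
`v₀x₁⁶ + v₁₂x₃⁶ ≥ 2√(v₀v₁₂)|x₁x₃|³`, together with the hypothesis on `√(v₀v₁₂)`.
-/

open Real

lemma two_mul_sqrt_mul_mul_abs_le {a b : ℝ} (ha : 0 ≤ a) (hb : 0 ≤ b) (p q : ℝ) :
    2 * √(a * b) * |p * q| ≤ a * p ^ 2 + b * q ^ 2 := by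
  calc 2 * √(a * b) * |p * q| = 2 * (√a * |p|) * (√b * |q|) := by
        rw [sqrt_mul ha, abs_mul]; ring
    _ ≤ (√a * |p|) ^ 2 + (√b * |q|) ^ 2 := two_mul_le_add_sq _ _
    _ = a * p ^ 2 + b * q ^ 2 := by
        rw [mul_pow, mul_pow, sq_sqrt ha, sq_sqrt hb, sq_abs, sq_abs]

lemma shifted_cubic_eq_sq_mul (u s : ℝ) :
    u ^ 3 - 30 * s * u ^ 2 + 90 * s ^ 2 * u + (1100 + 140 * √70) * s ^ 3
      = (u - (10 + √70) * s) ^ 2 * (u + (2 * √70 - 10) * s) := by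
  linear_combination
    (3 * s ^ 2 * u - (2 * √70 + 30) * s ^ 3) * sq_sqrt (show (0 : ℝ) ≤ 70 by norm_num)

lemma shifted_cubic_nonneg {u s : ℝ} (hu : 0 ≤ u) (hs : 0 ≤ s) :
    0 ≤ u ^ 3 - 30 * s * u ^ 2 + 90 * s ^ 2 * u + (1100 + 140 * √70) * s ^ 3 := by
  have h5 : (5 : ℝ) ≤ √70 := le_sqrt_of_sq_le (by norm_num)
  rw [shifted_cubic_eq_sq_mul]
  exact mul_nonneg (sq_nonneg _) (by nlinarith)

lemma cubic_add_mul_abs_pow_nonneg {u : ℝ} (hu : 0 ≤ u) (t : ℝ) :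
    0 ≤ u ^ 3 + 30 * t * u ^ 2 + 90 * t ^ 2 * u + 20 * t ^ 3
      + 2 * (560 + 70 * √70) * |t| ^ 3 := by
  rcases le_or_gt 0 t with ht | ht
  · have h70 := sqrt_nonneg 70
    positivity
  · have key := shifted_cubic_nonneg hu (neg_nonneg.mpr ht.le)
    rw [abs_of_neg ht]
    linarith

theorem stmt_1 (v0 v6 v12 : ℝ) (hv0 : 0 ≤ v0) (hv6 : 0 ≤ v6) (hv12 : 0 ≤ v12)
    (h : Real.sqrt (v0 * v12) ≥ (560 + 70 * Real.sqrt 70) * v6) :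
    ∀ x1 x2 x3 : ℝ,
      0 ≤ v0 * x1 ^ 6 +
          v6 * (x2 ^ 6 + 30 * x1 * x2 ^ 4 * x3 + 90 * x1 ^ 2 * x2 ^ 2 * x3 ^ 2 +
            20 * x1 ^ 3 * x3 ^ 3) + v12 * x3 ^ 6 := by
  intro x1 x2 x3
  set t := x1 * x3
  have hcubic := mul_nonneg hv6 (cubic_add_mul_abs_pow_nonneg (sq_nonneg x2) t)
  have hamgm : 2 * √(v0 * v12) * |t| ^ 3 ≤ v0 * x1 ^ 6 + v12 * x3 ^ 6 := by
    have := two_mul_sqrt_mul_mul_abs_le hv0 hv12 (x1 ^ 3) (x3 ^ 3)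
    rwa [← mul_pow, abs_pow, ← pow_mul, ← pow_mul] at this
  have hcoeff : 2 * (560 + 70 * √70) * v6 * |t| ^ 3 ≤ 2 * √(v0 * v12) * |t| ^ 3 :=
    mul_le_mul_of_nonneg_right (by linarith) (by positivity)
  linear_combination hcubic + hamgm + hcoeff
end

section
/- If the polynomial $f(x_1,x_2,x_3) = v_0 x_1^6 + v_6(x_2^6 + 30 x_1 x_2^4 x_3 + 90 x_1^2 x_2^2 x_3^2 + 20 x_1^3 x_3^3) + v_{12} x_3^6$ with $v_0, v_6, v_{12} \ge 0$ is nonnegative for all $(x_1,x_2,x_3) \in \mathbb{R}^3$, then $\sqrt{v_0 v_{12}} \ge (560 + 70\sqrt{70}) v_6$. -/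
/-!
Restrict the form to the curve `x₁ = -r`, `x₂ = √(s r)`, `x₃ = 1` with `r ≥ 0`: it becomes
`v₀ (r³)² + v₆ p(s) r³ + v₁₂` with `p(s) = s³ - 30 s² + 90 s - 20`. At the minimiser
`s = 10 + √70` of `p` on `[0, ∞)` one has `p(s) = -(1120 + 140 √70)`, so the quadratic
`v₀ t² - (1120 + 140 √70) v₆ t + v₁₂` is nonnegative for `t ≥ 0`, hence everywhere, and its
discriminant is nonpositive.
-/

def hankelForm (v0 v6 v12 x1 x2 x3 : ℝ) : ℝ :=
  v0 * x1 ^ 6 +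
    v6 * (x2 ^ 6 + 30 * x1 * x2 ^ 4 * x3 + 90 * x1 ^ 2 * x2 ^ 2 * x3 ^ 2 + 20 * x1 ^ 3 * x3 ^ 3) +
    v12 * x3 ^ 6

lemma hankelForm_neg_sqrt_one (v0 v6 v12 : ℝ) {r s : ℝ} (hr : 0 ≤ r) (hs : 0 ≤ s) :
    hankelForm v0 v6 v12 (-r) √(s * r) 1 =
      v0 * (r ^ 3) ^ 2 + v6 * (s ^ 3 - 30 * s ^ 2 + 90 * s - 20) * r ^ 3 + v12 := by
  have hsq : √(s * r) ^ 2 = s * r := Real.sq_sqrt (mul_nonneg hs hr)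
  have h4 : √(s * r) ^ 4 = (s * r) ^ 2 := by rw [show 4 = 2 * 2 from rfl, pow_mul, hsq]
  have h6 : √(s * r) ^ 6 = (s * r) ^ 3 := by rw [show 6 = 2 * 3 from rfl, pow_mul, hsq]
  simp only [hankelForm, hsq, h4, h6]
  ring

lemma sqrt70_cubic_eval :
    (10 + √70) ^ 3 - 30 * (10 + √70) ^ 2 + 90 * (10 + √70) - 20 = -(1120 + 140 * √70) := by
  linear_combination √70 * Real.sq_sqrt (show (0 : ℝ) ≤ 70 by norm_num)

lemma le_two_sqrt_mul_of_forall_nonneg {a k c : ℝ} (ha : 0 ≤ a) (hc : 0 ≤ c)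
    (h : ∀ t, 0 ≤ t → 0 ≤ a * t ^ 2 - k * t + c) : k ≤ 2 * √(a * c) := by
  rcases lt_or_ge k 0 with hk | hk
  · have := Real.sqrt_nonneg (a * c); linarith
  have hall : ∀ t, 0 ≤ a * (t * t) + -k * t + c := by
    intro t
    rcases le_total 0 t with ht | ht
    · linarith [h t ht, sq t]
    · nlinarith [mul_nonneg ha (mul_self_nonneg t)]
  have hdisc : k ^ 2 ≤ 4 * a * c := by
    have := discrim_le_zero hall
    simp only [discrim] at this
    linarith
  calc k ≤ |k| := le_abs_self k
    _ ≤ √(4 * a * c) := Real.abs_le_sqrt hdisc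
    _ = 2 * √(a * c) := by
      rw [mul_assoc, Real.sqrt_mul (by norm_num), show (4 : ℝ) = 2 ^ 2 by norm_num,
        Real.sqrt_sq (by norm_num)]

theorem stmt_2_general (v0 v6 v12 : ℝ) (hv0 : 0 ≤ v0) (hv12 : 0 ≤ v12)
    (h : ∀ x1 x2 x3 : ℝ,
      0 ≤ v0 * x1 ^ 6 +
          v6 * (x2 ^ 6 + 30 * x1 * x2 ^ 4 * x3 + 90 * x1 ^ 2 * x2 ^ 2 * x3 ^ 2 +
            20 * x1 ^ 3 * x3 ^ 3) + v12 * x3 ^ 6) :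
    Real.sqrt (v0 * v12) ≥ (560 + 70 * Real.sqrt 70) * v6 := by
  have hquad : ∀ t, 0 ≤ t → 0 ≤ v0 * t ^ 2 - (1120 + 140 * √70) * v6 * t + v12 := by
    intro t ht
    obtain ⟨r, hr, rfl⟩ : ∃ r, 0 ≤ r ∧ r ^ 3 = t :=
      ⟨t ^ (3⁻¹ : ℝ), by positivity, by exact_mod_cast Real.rpow_inv_natCast_pow ht three_ne_zero⟩
    have : 0 ≤ hankelForm v0 v6 v12 (-r) √((10 + √70) * r) 1 := h _ _ _
    rw [hankelForm_neg_sqrt_one v0 v6 v12 hr (by positivity), sqrt70_cubic_eval] at this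
    linarith
  have := le_two_sqrt_mul_of_forall_nonneg hv0 hv12 hquad
  linarith

theorem stmt_2 (v0 v6 v12 : ℝ) (hv0 : 0 ≤ v0) (hv6 : 0 ≤ v6) (hv12 : 0 ≤ v12)
    (h : ∀ x1 x2 x3 : ℝ,
      0 ≤ v0 * x1 ^ 6 +
          v6 * (x2 ^ 6 + 30 * x1 * x2 ^ 4 * x3 + 90 * x1 ^ 2 * x2 ^ 2 * x3 ^ 2 +
            20 * x1 ^ 3 * x3 ^ 3) + v12 * x3 ^ 6) :
    Real.sqrt (v0 * v12) ≥ (560 + 70 * Real.sqrt 70) * v6 :=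
  stmt_2_general v0 v6 v12 hv0 hv12 h
end

section
/- If $v_0, v_6, v_{12} \ge 0$ and $\sqrt{v_0 v_{12}} \ge (560 + 70\sqrt{70}) v_6$, then the polynomial $f(x_1,x_2,x_3) = v_0 x_1^6 + v_6(x_2^6 + 30 x_1 x_2^4 x_3 + 90 x_1^2 x_2^2 x_3^2 + 20 x_1^3 x_3^3) + v_{12} x_3^6$ is a sum of squares of real polynomials of degree 3. -/
/-!
The scaling `(x₀, x₁, x₂) ↦ (α x₀, x₁, γ x₂)` with `α γ = 1` fixes the `v₆`-part of the
sextic and multiplies `v₀` by `α⁶` and `v₁₂` by `γ⁶`. Writing `c = 560 + 70√70`, the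
hypothesis `c v₆ ≤ √(v₀ v₁₂)` lets one choose `α` with `c v₆ α⁶ ≤ v₀` and `c v₆ γ⁶ ≤ v₁₂`,
so the form is `v₆` times a rescaled copy of the critical form `c x₀⁶ + (⋯) + c x₂⁶` plus
nonnegative multiples of `(x₀³)²` and `(x₂³)²`. The critical form is a sum of squares by
an explicit `L D Lᵀ` certificate with entries in `ℚ(√70)`.
-/

open MvPolynomial

namespace MvPolynomial

variable {σ τ R : Type*} [CommSemiring R]

def IsSumSqForms (n : ℕ) (p : MvPolynomial σ R) : Prop :=
  ∃ (k : ℕ) (g : Fin k → MvPolynomial σ R),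
    (∀ i, (g i).IsHomogeneous n) ∧ p = ∑ i, g i ^ 2

theorem isSumSqForms_sq {n : ℕ} {q : MvPolynomial σ R} (hq : q.IsHomogeneous n) :
    IsSumSqForms n (q ^ 2) :=
  ⟨1, fun _ ↦ q, fun _ ↦ hq, by simp⟩

namespace IsSumSqForms

variable {n : ℕ} {p q : MvPolynomial σ R}

theorem zero : IsSumSqForms n (0 : MvPolynomial σ R) :=
  ⟨0, Fin.elim0, Fin.rec0, by simp⟩

theorem add (hp : IsSumSqForms n p) (hq : IsSumSqForms n q) : IsSumSqForms n (p + q) := by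
  obtain ⟨k, f, hf, rfl⟩ := hp
  obtain ⟨l, g, hg, rfl⟩ := hq
  refine ⟨k + l, Fin.append f g, Fin.addCases (by simpa using hf) (by simpa using hg), ?_⟩
  simp [Fin.sum_univ_add]

theorem sum {ι : Type*} (s : Finset ι) {p : ι → MvPolynomial σ R}
    (h : ∀ i ∈ s, IsSumSqForms n (p i)) : IsSumSqForms n (∑ i ∈ s, p i) :=
  Finset.sum_induction p _ (fun _ _ ↦ add) zero h

theorem C_mul {r : R} (hr : IsSquare r) (hp : IsSumSqForms n p) : IsSumSqForms n (C r * p) := by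
  obtain ⟨s, rfl⟩ := hr
  obtain ⟨k, g, hg, rfl⟩ := hp
  refine ⟨k, fun i ↦ C s * g i, fun i ↦ (hg i).C_mul s, ?_⟩
  simp only [map_mul, Finset.mul_sum]
  exact Finset.sum_congr rfl fun i _ ↦ by ring

theorem aeval (hp : IsSumSqForms n p) (g : σ → MvPolynomial τ R)
    (hg : ∀ i, (g i).IsHomogeneous 1) : IsSumSqForms n (aeval g p) := by
  obtain ⟨k, f, hf, rfl⟩ := hp
  exact ⟨k, fun i ↦ MvPolynomial.aeval g (f i), fun i ↦ by simpa using (hf i).aeval g hg,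
    by simp⟩

end IsSumSqForms

end MvPolynomial

theorem Real.isSquare_of_nonneg {r : ℝ} (hr : 0 ≤ r) : IsSquare r :=
  ⟨√r, (Real.mul_self_sqrt hr).symm⟩

theorem exists_mul_eq_one_mul_pow_le {a b c : ℝ} (ha : 0 ≤ a) (hb : 0 ≤ b) (hc : 0 ≤ c)
    (h : a ^ 2 ≤ b * c) {n : ℕ} (hn : n ≠ 0) :
    ∃ α γ : ℝ, α * γ = 1 ∧ a * α ^ n ≤ b ∧ a * γ ^ n ≤ c := by
  rcases ha.eq_or_lt with rfl | ha
  · exact ⟨1, 1, one_mul 1, by simpa using hb, by simpa using hc⟩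
  have hb₀ : 0 < b := hb.lt_of_ne (by rintro rfl; nlinarith)
  set α := (b / a) ^ (n⁻¹ : ℝ)
  have hα : α ^ n = b / a := Real.rpow_inv_natCast_pow (by positivity) hn
  have hα0 : α ≠ 0 := by
    intro h0
    rw [h0, zero_pow hn] at hα
    exact (div_pos hb₀ ha).ne' hα.symm
  refine ⟨α, α⁻¹, mul_inv_cancel₀ hα0, by rw [hα, mul_div_cancel₀ _ ha.ne'], ?_⟩
  rw [inv_pow, hα, inv_div, mul_div, div_le_iff₀ hb₀]
  linarith

noncomputable def hankelSextic (v₀ v₆ v₁₂ : ℝ) : MvPolynomial (Fin 3) ℝ :=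
  C v₀ * X 0 ^ 6 +
    C v₆ * (X 1 ^ 6 + C 30 * X 0 * X 1 ^ 4 * X 2 +
      C 90 * X 0 ^ 2 * X 1 ^ 2 * X 2 ^ 2 + C 20 * X 0 ^ 3 * X 2 ^ 3) +
    C v₁₂ * X 2 ^ 6

theorem hankelSextic_add (a b c a' b' c' : ℝ) :
    hankelSextic a b c + hankelSextic a' b' c' = hankelSextic (a + a') (b + b') (c + c') := by
  simp only [hankelSextic, map_add]
  ring

theorem C_mul_hankelSextic (r a b c : ℝ) :
    C r * hankelSextic a b c = hankelSextic (r * a) (r * b) (r * c) := by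
  simp only [hankelSextic, map_mul]
  ring

theorem aeval_hankelSextic {α γ : ℝ} (h : α * γ = 1) (a b c : ℝ) :
    aeval (fun i ↦ C (![α, 1, γ] i) * X i) (hankelSextic a b c) =
      hankelSextic (α ^ 6 * a) b (γ ^ 6 * c) := by
  apply MvPolynomial.funext
  intro x
  simp only [hankelSextic, map_add, map_mul, map_pow, aeval_C, aeval_X, eval_C, eval_X,
    algebraMap_eq, Matrix.cons_val_zero, Matrix.cons_val_one, Matrix.cons_val_two,
    Matrix.head_cons, Matrix.tail_cons]
  linear_combination b * (30 * x 0 * x 1 ^ 4 * x 2 + 90 * x 0 ^ 2 * x 1 ^ 2 * x 2 ^ 2 * (α * γ + 1)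
    + 20 * x 0 ^ 3 * x 2 ^ 3 * ((α * γ) ^ 2 + α * γ + 1)) * h

theorem isSumSqForms_hankelSextic_zero {a c : ℝ} (ha : 0 ≤ a) (hc : 0 ≤ c) :
    IsSumSqForms 3 (hankelSextic a 0 c) := by
  have h : hankelSextic a 0 c = C a * (X 0 ^ 3) ^ 2 + C c * (X 2 ^ 3) ^ 2 := by
    simp only [hankelSextic, map_zero]
    ring
  rw [h]
  exact ((isSumSqForms_sq (isHomogeneous_X_pow 0 3)).C_mul (Real.isSquare_of_nonneg ha)).add
    ((isSumSqForms_sq (isHomogeneous_X_pow 2 3)).C_mul (Real.isSquare_of_nonneg hc))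

/- The critical form is invariant under `x₀ ↔ x₂` and under `x₁ ↦ -x₁`, so in this basis of
cubics its Gram matrix is block diagonal with blocks of sizes 3, 3, 3, 1. -/
noncomputable def symmCubicBasis : Fin 10 → MvPolynomial (Fin 3) ℝ :=
  ![X 0 ^ 3 + X 2 ^ 3, X 1 ^ 2 * (X 0 + X 2), X 0 * X 2 * (X 0 + X 2),
    X 0 ^ 3 - X 2 ^ 3, X 1 ^ 2 * (X 0 - X 2), X 0 * X 2 * (X 0 - X 2),
    X 1 ^ 3, X 1 * (X 0 ^ 2 + X 2 ^ 2), X 0 * X 1 * X 2, X 1 * (X 0 ^ 2 - X 2 ^ 2)]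

theorem isHomogeneous_symmCubicBasis (i : Fin 10) : (symmCubicBasis i).IsHomogeneous 3 := by
  have h₀ := isHomogeneous_X ℝ (0 : Fin 3)
  have h₁ := isHomogeneous_X ℝ (1 : Fin 3)
  have h₂ := isHomogeneous_X ℝ (2 : Fin 3)
  fin_cases i
  exacts [(isHomogeneous_X_pow 0 3).add (isHomogeneous_X_pow 2 3),
    (isHomogeneous_X_pow 1 2).mul (h₀.add h₂), (h₀.mul h₂).mul (h₀.add h₂),
    (isHomogeneous_X_pow 0 3).sub (isHomogeneous_X_pow 2 3),
    (isHomogeneous_X_pow 1 2).mul (h₀.sub h₂), (h₀.mul h₂).mul (h₀.sub h₂),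
    isHomogeneous_X_pow 1 3, h₁.mul ((isHomogeneous_X_pow 0 2).add (isHomogeneous_X_pow 2 2)),
    (h₀.mul h₁).mul h₂, h₁.mul ((isHomogeneous_X_pow 0 2).sub (isHomogeneous_X_pow 2 2))]

/- The factors `D` (diagonal) and `L` (rows) of a rank-8 decomposition `L D Lᵀ` of a Gram
matrix of the critical form in `symmCubicBasis`, with `t` standing for `√70`. -/
noncomputable def criticalWeight (t : ℝ) : Fin 8 → ℝ :=
  ![255 + 35 * t, (85090 - 9127 * t) / 829, (155020 - 485 * t) / 1717, 305 + 35 * t,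
    (96 * t - 795) / 97, 1, (25 + 5 * t) / 4, (310 - 5 * t) / 4]

noncomputable def criticalFactor (t : ℝ) : Matrix (Fin 8) (Fin 10) ℝ :=
  !![1, 857 / 829 - 219 / 1658 * t, 306 / 829 - 42 / 829 * t, 0, 0, 0, 0, 0, 0, 0;
     0, 1, (325 - 164 * t) / 5151, 0, 0, 0, 0, 0, 0, 0;
     0, 0, 1, 0, 0, 0, 0, 0, 0, 0;
     0, 0, 0, 1, 41 / 97 - 11 / 194 * t, 122 / 97 - 14 / 97 * t, 0, 0, 0, 0;
     0, 0, 0, 0, 1, 10 + t, 0, 0, 0, 0;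
     0, 0, 0, 0, 0, 0, 1, -15 / 2, t - 5, 0;
     0, 0, 0, 0, 0, 0, 0, 1, 2, 0;
     0, 0, 0, 0, 0, 0, 0, 0, 0, 1]

theorem criticalWeight_nonneg {t : ℝ} (ht₀ : 83 / 10 ≤ t) (ht₁ : t ≤ 9) (j : Fin 8) :
    0 ≤ criticalWeight t j := by
  fin_cases j <;> simp [criticalWeight] <;> linarith

theorem hankelSextic_eq_sum_criticalFactor_sq {t : ℝ} (ht : t ^ 2 = 70) :
    hankelSextic (560 + 70 * t) 1 (560 + 70 * t) =
      ∑ j, C (criticalWeight t j) * (∑ i, C (criticalFactor t j i) * symmCubicBasis i) ^ 2 := by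
  have ht₃ : t ^ 3 = 70 * t := by rw [pow_succ, ht]
  apply MvPolynomial.funext
  intro x
  simp only [hankelSextic, criticalWeight, criticalFactor, symmCubicBasis, map_add, map_sub,
    map_mul, map_pow, map_zero, eval_C, eval_X, Fin.sum_univ_succ, Fin.sum_univ_zero,
    Matrix.of_apply, Matrix.cons_val_zero, Matrix.cons_val_succ, Matrix.cons_val',
    Matrix.empty_val', Matrix.cons_val_fin_one]
  ring_nf
  rw [ht, ht₃]
  ring

theorem isSumSqForms_hankelSextic_critical :
    IsSumSqForms 3 (hankelSextic (560 + 70 * √70) 1 (560 + 70 * √70)) := by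
  have ht₀ : 83 / 10 ≤ √70 := Real.le_sqrt_of_sq_le (by norm_num)
  have ht₁ : √70 ≤ 9 := (Real.sqrt_le_left (by norm_num)).2 (by norm_num)
  rw [hankelSextic_eq_sum_criticalFactor_sq (Real.sq_sqrt (by norm_num))]
  refine IsSumSqForms.sum _ fun j _ ↦ (isSumSqForms_sq ?_).C_mul
    (Real.isSquare_of_nonneg (criticalWeight_nonneg ht₀ ht₁ j))
  exact IsHomogeneous.sum _ _ _ fun i _ ↦ (isHomogeneous_symmCubicBasis i).C_mul _

theorem stmt_3 (v0 v6 v12 : ℝ) (hv0 : 0 ≤ v0) (hv6 : 0 ≤ v6) (hv12 : 0 ≤ v12)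
    (h : Real.sqrt (v0 * v12) ≥ (560 + 70 * Real.sqrt 70) * v6) :
    ∃ (k : ℕ) (g : Fin k → MvPolynomial (Fin 3) ℝ),
      (∀ i, (g i).IsHomogeneous 3) ∧
      (C v0 * X 0 ^ 6 +
        C v6 * (X 1 ^ 6 + C 30 * X 0 * X 1 ^ 4 * X 2 +
          C 90 * X 0 ^ 2 * X 1 ^ 2 * X 2 ^ 2 + C 20 * X 0 ^ 3 * X 2 ^ 3) +
        C v12 * X 2 ^ 6 : MvPolynomial (Fin 3) ℝ) = ∑ i, (g i) ^ 2 := by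
  set c := 560 + 70 * √70
  have hcv6 : 0 ≤ c * v6 := mul_nonneg (by positivity) hv6
  obtain ⟨α, γ, hαγ, h₀, h₁₂⟩ := exists_mul_eq_one_mul_pow_le hcv6 hv0 hv12
    ((Real.le_sqrt hcv6 (mul_nonneg hv0 hv12)).1 h) (n := 6) (by norm_num)
  have hsplit : hankelSextic v0 v6 v12 =
      C v6 * aeval (fun i ↦ C (![α, 1, γ] i) * X i) (hankelSextic c 1 c) +
        hankelSextic (v0 - c * v6 * α ^ 6) 0 (v12 - c * v6 * γ ^ 6) := by
    rw [aeval_hankelSextic hαγ, C_mul_hankelSextic, hankelSextic_add]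
    congr 1 <;> ring
  show IsSumSqForms 3 (hankelSextic v0 v6 v12)
  rw [hsplit]
  exact ((isSumSqForms_hankelSextic_critical.aeval _ fun i ↦ isHomogeneous_C_mul_X _ i).C_mul
    (Real.isSquare_of_nonneg hv6)).add
    (isSumSqForms_hankelSextic_zero (sub_nonneg.2 h₀) (sub_nonneg.2 h₁₂))
end

section
/- For every even integer $m \ge 6$ and every $v_m > 0$, there exists $d > 0$ such that for all $v_0 \ge d\, v_m$, the polynomial $f(x_1,x_2,x_3) = v_0 x_1^m + v_0 x_3^m + v_m \sum \{ \binom{m}{t_1}\binom{m-t_1}{t_2} x_1^{t_1} x_2^{t_2} x_3^{m-t_1-t_2} : 2t_1 + t_2 = m,\ t_1, t_2 \ge 0 \}$ is nonnegative on $\mathbb{R}^3$. -/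
/-!
Write `m = 2k`, `p = x₁x₃` and `w = x₂²`. The sum is then the binary form
`w^k + ∑_{1 ≤ t ≤ k} cₜ pᵗ w^(k-t)`, and every mixed term `pᵗ w^(k-t)` is dominated by the two
extreme monomials: with `C = ∑ |cₜ|` one has `C |p|ᵗ w^(k-t) ≤ (C|p|)^k + w^k`, so the form
becomes nonnegative once `C^k |p|^k` is added. Finally `|p|^k ≤ x₁^m + x₃^m`, so that term is
paid for by `v₀ (x₁^m + x₃^m)` as soon as `v₀ ≥ C^k vₘ`.
-/

open Finset

section BinaryForm

variable {R : Type*} [CommRing R] [LinearOrder R] [IsStrictOrderedRing R]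

lemma pow_mul_pow_sub_le_pow_add_pow {x y : R} (hx : 0 ≤ x) (hy : 0 ≤ y) {t n : ℕ}
    (ht : t ≤ n) : x ^ t * y ^ (n - t) ≤ x ^ n + y ^ n := by
  calc x ^ t * y ^ (n - t) ≤ max x y ^ t * max x y ^ (n - t) :=
        mul_le_mul (pow_le_pow_left₀ hx (le_max_left x y) t)
          (pow_le_pow_left₀ hy (le_max_right x y) _) (by positivity)
          (pow_nonneg (hx.trans (le_max_left x y)) t)
    _ = max x y ^ n := by rw [← pow_add, Nat.add_sub_cancel' ht]
    _ ≤ x ^ n + y ^ n := by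
      rcases le_total x y with h | h
      · rw [max_eq_right h]; exact le_add_of_nonneg_left (pow_nonneg hx n)
      · rw [max_eq_left h]; exact le_add_of_nonneg_right (pow_nonneg hy n)

lemma mul_pow_mul_pow_sub_le {B a w : R} (hB : 1 ≤ B) (ha : 0 ≤ a) (hw : 0 ≤ w) {t k : ℕ}
    (ht : 1 ≤ t) (htk : t ≤ k) : B * (a ^ t * w ^ (k - t)) ≤ (B * a) ^ k + w ^ k := by
  calc B * (a ^ t * w ^ (k - t)) ≤ B ^ t * (a ^ t * w ^ (k - t)) :=
        mul_le_mul_of_nonneg_right (le_self_pow₀ hB (by omega)) (by positivity)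
    _ = (B * a) ^ t * w ^ (k - t) := by ring
    _ ≤ (B * a) ^ k + w ^ k :=
        pow_mul_pow_sub_le_pow_add_pow (mul_nonneg (zero_le_one.trans hB) ha) hw htk

lemma neg_abs_mul_le_mul_coeff_mul_pow_mul_pow_sub {B c p w : R} (hB : 1 ≤ B) (hw : 0 ≤ w)
    {t k : ℕ} (ht : 1 ≤ t) (htk : t ≤ k) :
    -(|c| * ((B * |p|) ^ k + w ^ k)) ≤ B * (c * p ^ t * w ^ (k - t)) := by
  have habs : |c * p ^ t * w ^ (k - t)| = |c| * (|p| ^ t * w ^ (k - t)) := by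
    rw [abs_mul, abs_mul, abs_pow, abs_of_nonneg (pow_nonneg hw _), mul_assoc]
  calc -(|c| * ((B * |p|) ^ k + w ^ k))
        ≤ -(|c| * (B * (|p| ^ t * w ^ (k - t)))) :=
          neg_le_neg (mul_le_mul_of_nonneg_left
            (mul_pow_mul_pow_sub_le hB (abs_nonneg p) hw ht htk) (abs_nonneg c))
    _ = B * -|c * p ^ t * w ^ (k - t)| := by rw [habs]; ring
    _ ≤ B * (c * p ^ t * w ^ (k - t)) :=
          mul_le_mul_of_nonneg_left (neg_abs_le _) (zero_le_one.trans hB)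

lemma sum_coeff_mul_pow_mul_pow_sub_add_nonneg (k : ℕ) (c : ℕ → R) (hc : c 0 = 1) (p : R)
    {w : R} (hw : 0 ≤ w) :
    0 ≤ ∑ t ∈ range (k + 1), c t * p ^ t * w ^ (k - t) +
      (∑ t ∈ range (k + 1), |c t|) ^ k * |p| ^ k := by
  set C := ∑ t ∈ range (k + 1), |c t|
  set X := (C * |p|) ^ k + w ^ k
  have hC : ∑ i ∈ range k, |c (i + 1)| = C - 1 := by
    simp only [C, sum_range_succ', hc, abs_one, add_sub_cancel_right]
  have hC1 : 1 ≤ C := by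
    linarith [hC ▸ sum_nonneg fun i (_ : i ∈ range k) => abs_nonneg (c (i + 1))]
  have hmixed :
      -((C - 1) * X) ≤ C * ∑ i ∈ range k, c (i + 1) * p ^ (i + 1) * w ^ (k - (i + 1)) := by
    rw [mul_sum, ← hC, sum_mul, ← sum_neg_distrib]
    refine sum_le_sum fun i hi => ?_
    exact neg_abs_mul_le_mul_coeff_mul_pow_mul_pow_sub hC1 hw (Nat.le_add_left 1 i)
      (mem_range.mp hi)
  have hX : 0 ≤ X := add_nonneg (pow_nonneg (by positivity) k) (pow_nonneg hw k)
  refine nonneg_of_mul_nonneg_right ?_ (zero_lt_one.trans_le hC1)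
  calc (0 : R) ≤ X := hX
    _ = C * (w ^ k + (C * |p|) ^ k) - (C - 1) * X := by ring
    _ ≤ C * (∑ t ∈ range (k + 1), c t * p ^ t * w ^ (k - t) + C ^ k * |p| ^ k) := by
      rw [sum_range_succ', hc, mul_pow]
      simp only [pow_zero, mul_one, one_mul, Nat.sub_zero]
      linarith

end BinaryForm

lemma abs_mul_pow_le_pow_two_mul_add {x y : ℝ} (k : ℕ) :
    |x * y| ^ k ≤ x ^ (2 * k) + y ^ (2 * k) := by
  rw [abs_mul, mul_pow, ← (even_two_mul k).pow_abs x, ← (even_two_mul k).pow_abs y]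
  simpa [two_mul] using
    pow_mul_pow_sub_le_pow_add_pow (abs_nonneg x) (abs_nonneg y) (Nat.le_mul_of_pos_left k two_pos)

theorem stmt_5_general (m : ℕ) (hme : Even m) (vm : ℝ) (hvm : 0 < vm) :
    ∃ d : ℝ, 0 < d ∧ ∀ v0 : ℝ, d * vm ≤ v0 →
      ∀ x1 x2 x3 : ℝ,
        0 ≤ v0 * x1 ^ m + v0 * x3 ^ m +
            vm * ∑ t1 ∈ Finset.range (m / 2 + 1),
              (m.choose t1 : ℝ) * ((m - t1).choose (m - 2 * t1) : ℝ) *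
                x1 ^ t1 * x2 ^ (m - 2 * t1) * x3 ^ t1 := by
  obtain ⟨k, rfl⟩ := even_iff_two_dvd.mp hme
  set c : ℕ → ℝ := fun t => ((2 * k).choose t : ℝ) * ((2 * k - t).choose (2 * k - 2 * t) : ℝ)
  have hc : c 0 = 1 := by simp [c]
  set C := ∑ t ∈ range (k + 1), |c t|
  have hC : 1 ≤ C := by
    simpa [C, hc] using single_le_sum (fun t _ => abs_nonneg (c t)) (mem_range.2 k.succ_pos)
  refine ⟨C ^ k, by positivity, fun v0 hv0 x1 x2 x3 => ?_⟩
  have hform : ∑ t ∈ range (2 * k / 2 + 1), c t * x1 ^ t * x2 ^ (2 * k - 2 * t) * x3 ^ t =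
      ∑ t ∈ range (k + 1), c t * (x1 * x3) ^ t * (x2 ^ 2) ^ (k - t) := by
    rw [Nat.mul_div_cancel_left k two_pos]
    refine sum_congr rfl fun t _ => ?_
    rw [← pow_mul, show 2 * k - 2 * t = 2 * (k - t) by omega]
    ring
  have hbinary := sum_coeff_mul_pow_mul_pow_sub_add_nonneg k c hc (x1 * x3) (sq_nonneg x2)
  have hextreme : vm * (C ^ k * |x1 * x3| ^ k) ≤ v0 * x1 ^ (2 * k) + v0 * x3 ^ (2 * k) := by
    rw [← mul_add, ← mul_assoc, mul_comm vm]
    exact mul_le_mul hv0 (abs_mul_pow_le_pow_two_mul_add k) (by positivity)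
      ((by positivity : 0 ≤ C ^ k * vm).trans hv0)
  change 0 ≤ _ + vm * ∑ t ∈ range (2 * k / 2 + 1), c t * x1 ^ t * x2 ^ (2 * k - 2 * t) * x3 ^ t
  rw [hform]
  linarith [mul_nonneg hvm.le hbinary]

theorem stmt_5 (m : ℕ) (hm : 6 ≤ m) (hme : Even m) (vm : ℝ) (hvm : 0 < vm) :
    ∃ d : ℝ, 0 < d ∧ ∀ v0 : ℝ, d * vm ≤ v0 →
      ∀ x1 x2 x3 : ℝ,
        0 ≤ v0 * x1 ^ m + v0 * x3 ^ m +
            vm * ∑ t1 ∈ Finset.range (m / 2 + 1),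
              (m.choose t1 : ℝ) * ((m - t1).choose (m - 2 * t1) : ℝ) *
                x1 ^ t1 * x2 ^ (m - 2 * t1) * x3 ^ t1 :=
  stmt_5_general m hme vm hvm
end

section
/- Suppose the polynomial $f(x_1,x_2,x_3) = v_0 x_1^6 + 6 v_1 x_1^5 x_2 + v_6(x_2^6 + 30 x_1 x_2^4 x_3 + 90 x_1^2 x_2^2 x_3^2 + 20 x_1^3 x_3^3) + 6 v_{11} x_2 x_3^5 + v_{12} x_3^6$ is nonnegative on $\mathbb{R}^3$ with $v_0, v_6, v_{12} \ge 0$. Then $|v_1| \le (v_0/5)^{5/6} v_6^{1/6}$, $|v_{11}| \le (v_{12}/5)^{5/6} v_6^{1/6}$, and $\sqrt{v_0 v_{12}} \ge 10 v_6$. -/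
/-!
Restricting `f` to `x3 = 0` (with `x1 = 1`) and to `x1 = 0` (with `x3 = 1`) leaves sextics
`a + 6 b t + c t⁶` in one variable; evaluating at `t = ∓a / (5|b|)`, near the minimiser,
gives `5⁵ b⁶ ≤ a⁵ c`. Restricting to `x2 = 0, x3 = 1` leaves a quadratic in `x1³`, which is
surjective onto `ℝ`, so the discriminant `(20 v6)² - 4 v0 v12` is nonpositive.
-/

theorem pow_six_le_of_forall_sextic_nonneg {a B c : ℝ} (hB : 0 ≤ B) (hc : 0 ≤ c)
    (h : ∀ s, 0 ≤ a - 6 * B * s + c * s ^ 6) : 5 ^ 5 * B ^ 6 ≤ a ^ 5 * c := by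
  have ha : 0 ≤ a := by simpa using h 0
  rcases hB.eq_or_lt with rfl | hB
  · rw [zero_pow (by norm_num), mul_zero]; positivity
  rcases ha.eq_or_lt with rfl | ha
  -- For `a = 0` the point `s = B / (B + c) ≤ 1` has `c s⁶ ≤ s · c s ≤ s B < 6 B s`.
  · exfalso
    set s := B / (B + c)
    have hs : 0 < s := by positivity
    have hs1 : s ≤ 1 := div_le_one_of_le₀ (by linarith) (by positivity)
    have hcs : c * s ≤ B := by
      rw [mul_div_assoc', div_le_iff₀ (by positivity)]; nlinarith
    have := h s
    have hs6 : s ^ 6 ≤ s ^ 2 := pow_le_pow_of_le_one hs.le hs1 (by norm_num)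
    nlinarith [mul_le_mul_of_nonneg_left hs6 hc]
  · have key : a * (5 ^ 5 * B ^ 6) ≤ a * (a ^ 5 * c) := by
      have := h (a / (5 * B))
      field_simp at this
      nlinarith
    exact le_of_mul_le_mul_left key ha

theorem abs_le_of_forall_sextic_nonneg {a b c : ℝ} (hc : 0 ≤ c)
    (h : ∀ t, 0 ≤ a + 6 * b * t + c * t ^ 6) :
    |b| ≤ (a / 5) ^ ((5 : ℝ) / 6) * c ^ ((1 : ℝ) / 6) := by
  have ha : 0 ≤ a := by simpa using h 0
  have h_abs : ∀ s, 0 ≤ a - 6 * |b| * s + c * s ^ 6 := by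
    intro s
    rcases abs_cases b with ⟨hb, -⟩ | ⟨hb, -⟩
    · convert h (-s) using 1; rw [hb]; ring
    · convert h s using 1; rw [hb]; ring
  have h6 : |b| ^ 6 ≤ (a / 5) ^ 5 * c := by
    have := pow_six_le_of_forall_sextic_nonneg (abs_nonneg b) hc h_abs
    rw [div_pow]; field_simp; linarith
  calc |b| = (|b| ^ 6) ^ ((1 : ℝ) / 6) := by
        rw [one_div]; exact_mod_cast (Real.pow_rpow_inv_natCast (abs_nonneg b) (by norm_num)).symm
    _ ≤ ((a / 5) ^ 5 * c) ^ ((1 : ℝ) / 6) := by gcongr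
    _ = (a / 5) ^ ((5 : ℝ) / 6) * c ^ ((1 : ℝ) / 6) := by
        rw [Real.mul_rpow (by positivity) hc, ← Real.rpow_natCast, ← Real.rpow_mul (by positivity)]
        norm_num

theorem Real.pow_surjective_of_odd {n : ℕ} (hn : Odd n) :
    Function.Surjective fun x : ℝ => x ^ n := by
  intro u
  rcases le_total 0 u with hu | hu
  · exact ⟨u ^ (n⁻¹ : ℝ), Real.rpow_inv_natCast_pow hu hn.pos.ne'⟩
  · refine ⟨-(-u) ^ (n⁻¹ : ℝ), ?_⟩
    simp only [hn.neg_pow, Real.rpow_inv_natCast_pow (neg_nonneg.2 hu) hn.pos.ne', neg_neg]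

theorem stmt_8_general (v0 v1 v6 v11 v12 : ℝ) (hv6 : 0 ≤ v6)
    (h : ∀ x1 x2 x3 : ℝ,
      0 ≤ v0 * x1 ^ 6 + 6 * v1 * x1 ^ 5 * x2 +
          v6 * (x2 ^ 6 + 30 * x1 * x2 ^ 4 * x3 + 90 * x1 ^ 2 * x2 ^ 2 * x3 ^ 2 +
            20 * x1 ^ 3 * x3 ^ 3) + 6 * v11 * x2 * x3 ^ 5 + v12 * x3 ^ 6) :
    |v1| ≤ (v0 / 5) ^ ((5 : ℝ) / 6) * v6 ^ ((1 : ℝ) / 6) ∧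
    |v11| ≤ (v12 / 5) ^ ((5 : ℝ) / 6) * v6 ^ ((1 : ℝ) / 6) ∧
    Real.sqrt (v0 * v12) ≥ 10 * v6 := by
  refine ⟨abs_le_of_forall_sextic_nonneg hv6 fun t => ?_,
    abs_le_of_forall_sextic_nonneg hv6 fun t => ?_, ?_⟩
  · linarith [h 1 t 0]
  · linarith [h 0 t 1]
  · have h_quad : ∀ y : ℝ, 0 ≤ v0 * (y * y) + 20 * v6 * y + v12 := by
      intro y
      obtain ⟨x, rfl⟩ := Real.pow_surjective_of_odd (n := 3) ⟨1, rfl⟩ y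
      linarith [h x 0 1]
    have h_discr := discrim_le_zero h_quad
    rw [discrim] at h_discr
    calc 10 * v6 ≤ |10 * v6| := le_abs_self _
      _ ≤ Real.sqrt (v0 * v12) := Real.abs_le_sqrt (by linarith)

theorem stmt_8 (v0 v1 v6 v11 v12 : ℝ) (hv0 : 0 ≤ v0) (hv6 : 0 ≤ v6) (hv12 : 0 ≤ v12)
    (h : ∀ x1 x2 x3 : ℝ,
      0 ≤ v0 * x1 ^ 6 + 6 * v1 * x1 ^ 5 * x2 +
          v6 * (x2 ^ 6 + 30 * x1 * x2 ^ 4 * x3 + 90 * x1 ^ 2 * x2 ^ 2 * x3 ^ 2 +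
            20 * x1 ^ 3 * x3 ^ 3) + 6 * v11 * x2 * x3 ^ 5 + v12 * x3 ^ 6) :
    |v1| ≤ (v0 / 5) ^ ((5 : ℝ) / 6) * v6 ^ ((1 : ℝ) / 6) ∧
    |v11| ≤ (v12 / 5) ^ ((5 : ℝ) / 6) * v6 ^ ((1 : ℝ) / 6) ∧
    Real.sqrt (v0 * v12) ≥ 10 * v6 :=
  stmt_8_general v0 v1 v6 v11 v12 hv6 h
end

section
/- Suppose the polynomial $f(x_1,x_2,x_3) = v_0 x_1^6 + 6 v_1 x_1^5 x_2 + v_6(x_2^6 + 30 x_1 x_2^4 x_3 + 90 x_1^2 x_2^2 x_3^2 + 20 x_1^3 x_3^3) + 6 v_{11} x_2 x_3^5 + v_{12} x_3^6$ is nonnegative on $\mathbb{R}^3$, $v_0, v_6, v_{12} \ge 0$, and additionally $v_1 v_{12}^{5/6} = v_{11} v_0^{5/6}$. Then $\sqrt{v_0 v_{12}} \ge (560 + 70\sqrt{70}) v_6$. -/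
lemma aux_cube (v6 c : ℝ) (hv6 : 0 < v6) (h : ∀ x : ℝ, 0 ≤ 20 * v6 * x ^ 3 + c) : False := by
  set d := |c| / (20 * v6) with hd
  have hd0 : 0 ≤ d := by positivity
  have he : 20 * v6 * d = |c| := by
    rw [hd]; field_simp
  have habs : c ≤ |c| := le_abs_self c
  have h1 := h (-(d + 1))
  nlinarith [mul_nonneg hv6.le (pow_nonneg hd0 3), mul_nonneg hv6.le (pow_nonneg hd0 2)]

theorem stmt_9 (v0 v1 v6 v11 v12 : ℝ) (hv0 : 0 ≤ v0) (hv6 : 0 ≤ v6) (hv12 : 0 ≤ v12)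
    (h : ∀ x1 x2 x3 : ℝ,
      0 ≤ v0 * x1 ^ 6 + 6 * v1 * x1 ^ 5 * x2 +
          v6 * (x2 ^ 6 + 30 * x1 * x2 ^ 4 * x3 + 90 * x1 ^ 2 * x2 ^ 2 * x3 ^ 2 +
            20 * x1 ^ 3 * x3 ^ 3) + 6 * v11 * x2 * x3 ^ 5 + v12 * x3 ^ 6)
    (hsym : v1 * v12 ^ ((5 : ℝ) / 6) = v11 * v0 ^ ((5 : ℝ) / 6)) :
    Real.sqrt (v0 * v12) ≥ (560 + 70 * Real.sqrt 70) * v6 := by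
  set s := Real.sqrt 70 with hs
  have hs0 : 0 ≤ s := Real.sqrt_nonneg 70
  have h70 : s ^ 2 = 70 := Real.sq_sqrt (by norm_num)
  rcases hv6.eq_or_lt with hv6e | hv6p
  · rw [← hv6e]
    simpa using Real.sqrt_nonneg (v0 * v12)
  -- define sixth roots
  set A := v0 ^ ((1:ℝ)/6) with hA
  set B := v12 ^ ((1:ℝ)/6) with hB
  have hA0 : 0 ≤ A := Real.rpow_nonneg hv0 _
  have hB0 : 0 ≤ B := Real.rpow_nonneg hv12 _
  have hA6 : A ^ 6 = v0 := by
    rw [hA, ← Real.rpow_natCast (v0 ^ ((1:ℝ)/6)) 6, ← Real.rpow_mul hv0]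
    norm_num
  have hB6 : B ^ 6 = v12 := by
    rw [hB, ← Real.rpow_natCast (v12 ^ ((1:ℝ)/6)) 6, ← Real.rpow_mul hv12]
    norm_num
  have hA5 : A ^ 5 = v0 ^ ((5:ℝ)/6) := by
    rw [hA, ← Real.rpow_natCast (v0 ^ ((1:ℝ)/6)) 5, ← Real.rpow_mul hv0]
    norm_num
  have hB5 : B ^ 5 = v12 ^ ((5:ℝ)/6) := by
    rw [hB, ← Real.rpow_natCast (v12 ^ ((1:ℝ)/6)) 5, ← Real.rpow_mul hv12]
    norm_num
  have hlin : v1 * B ^ 5 = v11 * A ^ 5 := by rw [hA5, hB5]; exact hsym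
  set t : ℝ := 10 + s with ht
  have ht0 : (0:ℝ) ≤ t := by positivity
  set X := Real.sqrt (t * (A * B)) with hX
  have e1 : X ^ 2 = t * (A * B) := Real.sq_sqrt (by positivity)
  have hk := h B X (-A)
  have heq : v0 * B ^ 6 + 6 * v1 * B ^ 5 * X +
      v6 * (X ^ 6 + 30 * B * X ^ 4 * (-A) + 90 * B ^ 2 * X ^ 2 * (-A) ^ 2 +
        20 * B ^ 3 * (-A) ^ 3) + 6 * v11 * X * (-A) ^ 5 + v12 * (-A) ^ 6
      = 2 * (v0 * v12) + v6 * (t^3 - 30*t^2 + 90*t - 20) * (A^3 * B^3) := by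
    linear_combination v0 * hB6 + v12 * hA6 + 6 * X * hlin +
      v6 * (X^4 + X^2 * (t*A*B) + (t*A*B)^2) * e1 -
      30 * v6 * B * A * (X^2 + t*A*B) * e1 + 90 * v6 * B^2 * A^2 * e1
  rw [heq] at hk
  have hcoeff : t^3 - 30*t^2 + 90*t - 20 = -2 * (560 + 70 * s) := by
    rw [ht]; linear_combination s * h70
  rw [hcoeff] at hk
  set P := A ^ 3 * B ^ 3 with hP
  have hP0 : 0 ≤ P := by positivity
  have hsq : v0 * v12 = P ^ 2 := by rw [hP, ← hA6, ← hB6]; ring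
  have hsqrt : Real.sqrt (v0 * v12) = P := by rw [hsq, Real.sqrt_sq hP0]
  rw [hsqrt]
  rcases hP0.eq_or_lt with hPe | hPp
  · -- P = 0, so v0 = 0 or v12 = 0; derive contradiction from v6 > 0
    exfalso
    have hvv : v0 * v12 = 0 := by rw [hsq, ← hPe]; ring
    rcases mul_eq_zero.mp hvv with h0 | h0
    · apply aux_cube v6 v12 hv6p
      intro x
      have hx := h x 0 1
      rw [h0] at hx
      ring_nf at hx ⊢
      linarith
    · apply aux_cube v6 v0 hv6p
      intro x
      have hx := h 1 0 x
      rw [h0] at hx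
      ring_nf at hx ⊢
      linarith
  · -- P > 0
    have hC : 0 ≤ 560 + 70 * s := by positivity
    nlinarith [hk, hPp, mul_pos hPp hv6p]
end

section
/- Let $v_0, v_6, v_{12} > 0$ and suppose there exist $t_1, t_2 > 0$ satisfying: $|v_1| \le 1/t_1 - 10 v_6/(t_1 \sqrt{v_0 v_{12}})$; $|v_{11}| \le 1/t_2 - 10 v_6/(t_2 \sqrt{v_0 v_{12}})$; $|v_1|(5/(t_1 v_0))^5 + |v_{11}|(5/(t_2 v_{12}))^5 \le \frac{\sqrt{70}-8}{2} v_6$; and $\big(v_0 - 10 v_6 \sqrt{v_0/v_{12}} - |v_1| t_1 v_0\big)\big(v_{12} - 10 v_6 \sqrt{v_{12}/v_0} - |v_{11}| t_2 v_{12}\big)\big(\frac{\sqrt{70}-8}{2} v_6 - |v_1|(5/(t_1 v_0))^5 - |v_{11}|(5/(t_2 v_{12}))^5\big) \ge \frac{1}{27} v_6^3 (60 + 15\sqrt{70})^3$. Then $f(x_1,x_2,x_3) = v_0 x_1^6 + 6 v_1 x_1^5 x_2 + v_6(x_2^6 + 30 x_1 x_2^4 x_3 + 90 x_1^2 x_2^2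 x_3^2 + 20 x_1^3 x_3^3) + 6 v_{11} x_2 x_3^5 + v_{12} x_3^6$ is nonnegative on $\mathbb{R}^3$. -/
/-!
Weighted AM-GM, `|6 v x⁵ y| ≤ |v| (T x⁶ + (5/T)⁵ y⁶)` with `T = t₁ v₀` resp. `T = t₂ v₁₂`, absorbs
the two terms with `v₁` and `v₁₁` into the diagonal. The rest is clearly nonnegative when
`x₁ x₃ ≥ 0`. When `x₁ x₃ = -w < 0`, put `s = x₂²`, `p = √(v₀/v₁₂)`, `q = 1/p`, write the new
diagonal coefficients as `P + 10 v₆ p`, `Q + 10 v₆ q`, `R + (10 - √70)/2 · v₆` and `σ = √(PQ)`.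
Cauchy-Schwarz and AM-GM give `(P + 10 v₆ p) x₁⁶ + (Q + 10 v₆ q) x₃⁶ ≥ 2 (σ + 10 v₆) w³`, and the
hypothesis `PQR ≥ ((20 + 5√70) v₆)³` with three-term AM-GM gives
`R s³ + 2σ w³ ≥ 3 (20 + 5√70) v₆ s w²`. What is left is `v₆` times the cubic
`(10 - √70)/2 · s³ - 30 w s² + (150 + 15√70) w² s`, which is a square times `s` because `√70² = 70`.
-/

open Real

theorem six_mul_pow_five_mul_le {X Y : ℝ} (hX : 0 ≤ X) (hY : 0 ≤ Y) :
    6 * X ^ 5 * Y ≤ 5 * X ^ 6 + Y ^ 6 := by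
  have hfactor : 5 * X ^ 6 + Y ^ 6 - 6 * X ^ 5 * Y =
      (X - Y) ^ 2 * (5 * X ^ 4 + 4 * X ^ 3 * Y + 3 * X ^ 2 * Y ^ 2 + 2 * X * Y ^ 3 + Y ^ 4) := by
    ring
  have hnonneg : 0 ≤ (X - Y) ^ 2 *
      (5 * X ^ 4 + 4 * X ^ 3 * Y + 3 * X ^ 2 * Y ^ 2 + 2 * X * Y ^ 3 + Y ^ 4) := by
    positivity
  linarith

theorem abs_six_mul_mul_pow_five_mul_le {T : ℝ} (hT : 0 < T) (v x y : ℝ) :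
    |6 * v * x ^ 5 * y| ≤ |v| * (T * x ^ 6 + (5 / T) ^ 5 * y ^ 6) := by
  calc |6 * v * x ^ 5 * y| = |v| * ((5 / T) ^ 5 * (6 * (T / 5 * |x|) ^ 5 * |y|)) := by
        rw [abs_mul, abs_mul, abs_mul, abs_pow]; field_simp; norm_num; ring
    _ ≤ |v| * ((5 / T) ^ 5 * (5 * (T / 5 * |x|) ^ 6 + |y| ^ 6)) := by
        gcongr; exact six_mul_pow_five_mul_le (by positivity) (abs_nonneg y)
    _ = |v| * (T * x ^ 6 + (5 / T) ^ 5 * y ^ 6) := by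
        rw [mul_pow, Even.pow_abs ⟨3, rfl⟩, Even.pow_abs ⟨3, rfl⟩]
        field_simp

theorem div_sqrt_mul_eq_sqrt_div {a : ℝ} (ha : 0 ≤ a) (b : ℝ) : a / √(a * b) = √(a / b) := by
  rw [sqrt_mul ha, ← div_div, div_sqrt, sqrt_div ha]

theorem abs_mul_mul_le_of_abs_le {v t a m S : ℝ} (ht : 0 < t) (ha : 0 < a)
    (h : |v| ≤ 1 / t - m / (t * S)) : |v| * t * a ≤ a - m * (a / S) := by
  calc |v| * t * a ≤ (1 / t - m / (t * S)) * t * a := by gcongr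
    _ = a - m * (a / S) := by field_simp

theorem two_mul_le_of_sq_le_mul {a c k X Y z : ℝ} (ha : 0 ≤ a) (hc : 0 ≤ c) (hX : 0 ≤ X)
    (hY : 0 ≤ Y) (hXY : X * Y = z ^ 2) (h : k ^ 2 ≤ a * c) :
    2 * k * z ≤ a * X + c * Y := by
  have : k ^ 2 * z ^ 2 ≤ a * c * (X * Y) := by rw [hXY]; gcongr
  nlinarith [sq_nonneg (a * X - c * Y), mul_nonneg ha hX, mul_nonneg hc hY]

theorem sqrt_mul_add_sq_le {P Q m p q : ℝ} (hP : 0 ≤ P) (hQ : 0 ≤ Q) (hm : 0 ≤ m) (hp : 0 ≤ p)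
    (hq : 0 ≤ q) (hpq : p * q = 1) : (√(P * Q) + m) ^ 2 ≤ (P + m * p) * (Q + m * q) := by
  have hmid : 2 * √(P * Q) ≤ P * q + Q * p := by
    simpa using two_mul_le_of_sq_le_mul (k := 1) zero_le_one zero_le_one (mul_nonneg hP hq)
      (mul_nonneg hQ hp)
      (by rw [sq_sqrt (mul_nonneg hP hQ)]; linear_combination (P * Q) * hpq) (by norm_num)
  have hexpand : (P + m * p) * (Q + m * q) = √(P * Q) ^ 2 + m * (P * q + Q * p) + m ^ 2 := by
    rw [sq_sqrt (mul_nonneg hP hQ)]; linear_combination m ^ 2 * hpq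
  nlinarith [mul_le_mul_of_nonneg_left hmid hm]

theorem three_mul_le_of_pow_three_le {K R σ s w : ℝ} (hK : 0 ≤ K) (hR : 0 ≤ R) (hσ : 0 ≤ σ)
    (hs : 0 ≤ s) (hw : 0 ≤ w) (h : K ^ 3 ≤ R * σ ^ 2) :
    3 * K * s * w ^ 2 ≤ R * s ^ 3 + 2 * σ * w ^ 3 := by
  rcases hσ.eq_or_lt with rfl | hσ
  · have hK3 : K ^ 3 = 0 := le_antisymm (by simpa using h) (pow_nonneg hK 3)
    obtain rfl := pow_eq_zero_iff (n := 3) (by norm_num) |>.mp hK3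
    simp only [mul_zero, zero_mul]
    positivity
  have hfactor : 0 ≤ (K * s - σ * w) ^ 2 * (K * s + 2 * (σ * w)) := by positivity
  have : 0 ≤ σ ^ 2 * (R * s ^ 3 + 2 * σ * w ^ 3 - 3 * K * s * w ^ 2) := by
    nlinarith [mul_le_mul_of_nonneg_right h (pow_nonneg hs 3)]
  nlinarith [pow_pos hσ 2]

theorem sqrt_seventy_lt_ten : √70 < 10 := by
  rw [sqrt_lt' (by norm_num)]; norm_num

theorem cubic_nonneg {s w : ℝ} (hs : 0 ≤ s) :
    0 ≤ (10 - √70) / 2 * s ^ 3 - 30 * w * s ^ 2 + (150 + 15 * √70) * w ^ 2 * s := by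
  have h70 : √70 ^ 2 = 70 := sq_sqrt (by norm_num)
  have e : 2 * (10 - √70) * ((10 - √70) / 2 * s ^ 3 - 30 * w * s ^ 2 +
      (150 + 15 * √70) * w ^ 2 * s) = s * ((10 - √70) * s - 30 * w) ^ 2 := by
    linear_combination (-30 * w ^ 2 * s) * h70
  have : 0 ≤ s * ((10 - √70) * s - 30 * w) ^ 2 := by positivity
  nlinarith [sqrt_seventy_lt_ten]

theorem mixed_terms_le {P Q R m p q y z s w : ℝ} (hP : 0 ≤ P) (hQ : 0 ≤ Q) (hR : 0 ≤ R)
    (hm : 0 ≤ m) (hp : 0 ≤ p) (hq : 0 ≤ q) (hpq : p * q = 1)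
    (hK : ((20 + 5 * √70) * m) ^ 3 ≤ P * Q * R)
    (hy : 0 ≤ y) (hz : 0 ≤ z) (hs : 0 ≤ s) (hw : 0 ≤ w) (hyz : y * z = (w ^ 3) ^ 2) :
    m * (30 * w * s ^ 2 + 20 * w ^ 3) ≤
      (P + 10 * m * p) * y + (Q + 10 * m * q) * z + (R + (10 - √70) / 2 * m) * s ^ 3 +
        90 * m * w ^ 2 * s := by
  set σ := √(P * Q)
  have hσ : 0 ≤ σ := sqrt_nonneg _
  have hac : (σ + 10 * m) ^ 2 ≤ (P + 10 * m * p) * (Q + 10 * m * q) :=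
    sqrt_mul_add_sq_le hP hQ (by positivity) hp hq hpq
  have houter : 2 * (σ + 10 * m) * w ^ 3 ≤ (P + 10 * m * p) * y + (Q + 10 * m * q) * z :=
    two_mul_le_of_sq_le_mul (by positivity) (by positivity) hy hz hyz hac
  have hRσ : ((20 + 5 * √70) * m) ^ 3 ≤ R * σ ^ 2 := by
    rw [sq_sqrt (mul_nonneg hP hQ)]; linarith
  have hinner : 3 * ((20 + 5 * √70) * m) * s * w ^ 2 ≤ R * s ^ 3 + 2 * σ * w ^ 3 :=
    three_mul_le_of_pow_three_le (by positivity) hR hσ hs hw hRσ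
  have hcubic := mul_nonneg hm (cubic_nonneg (w := w) hs)
  linarith

theorem sextic_nonneg {P Q R m p q : ℝ} (hP : 0 ≤ P) (hQ : 0 ≤ Q) (hR : 0 ≤ R)
    (hm : 0 ≤ m) (hp : 0 ≤ p) (hq : 0 ≤ q) (hpq : p * q = 1)
    (hK : ((20 + 5 * √70) * m) ^ 3 ≤ P * Q * R) (x1 x2 x3 : ℝ) :
    0 ≤ (P + 10 * m * p) * x1 ^ 6 + (Q + 10 * m * q) * x3 ^ 6 +
      (R + (10 - √70) / 2 * m) * x2 ^ 6 +
      m * (30 * (x1 * x3) * x2 ^ 4 + 90 * (x1 * x3) ^ 2 * x2 ^ 2 + 20 * (x1 * x3) ^ 3) := by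
  have hb : 0 ≤ R + (10 - √70) / 2 * m :=
    add_nonneg hR (mul_nonneg (by linarith [sqrt_seventy_lt_ten]) hm)
  rcases le_total 0 (x1 * x3) with hu | hu
  · generalize x1 * x3 = u at hu ⊢
    positivity
  · have := mixed_terms_le hP hQ hR hm hp hq hpq hK (y := x1 ^ 6) (z := x3 ^ 6) (s := x2 ^ 2)
      (w := -(x1 * x3)) (by positivity) (by positivity) (by positivity) (by linarith) (by ring)
    linarith

theorem stmt_10 (v0 v1 v6 v11 v12 : ℝ) (hv0 : 0 < v0) (hv6 : 0 < v6) (hv12 : 0 < v12)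
    (t1 t2 : ℝ) (ht1 : 0 < t1) (ht2 : 0 < t2)
    (h1 : |v1| ≤ 1 / t1 - 10 * v6 / (t1 * Real.sqrt (v0 * v12)))
    (h2 : |v11| ≤ 1 / t2 - 10 * v6 / (t2 * Real.sqrt (v0 * v12)))
    (h3 : |v1| * (5 / (t1 * v0)) ^ 5 + |v11| * (5 / (t2 * v12)) ^ 5 ≤
      (Real.sqrt 70 - 8) / 2 * v6)
    (h4 : (v0 - 10 * v6 * Real.sqrt (v0 / v12) - |v1| * t1 * v0) *
        (v12 - 10 * v6 * Real.sqrt (v12 / v0) - |v11| * t2 * v12) *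
        ((Real.sqrt 70 - 8) / 2 * v6 - |v1| * (5 / (t1 * v0)) ^ 5 -
          |v11| * (5 / (t2 * v12)) ^ 5) ≥
      1 / 27 * v6 ^ 3 * (60 + 15 * Real.sqrt 70) ^ 3) :
    ∀ x1 x2 x3 : ℝ,
      0 ≤ v0 * x1 ^ 6 + 6 * v1 * x1 ^ 5 * x2 +
          v6 * (x2 ^ 6 + 30 * x1 * x2 ^ 4 * x3 + 90 * x1 ^ 2 * x2 ^ 2 * x3 ^ 2 +
            20 * x1 ^ 3 * x3 ^ 3) + 6 * v11 * x2 * x3 ^ 5 + v12 * x3 ^ 6 := by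
  intro x1 x2 x3
  have hP := abs_mul_mul_le_of_abs_le ht1 hv0 h1
  have hQ := abs_mul_mul_le_of_abs_le ht2 hv12 h2
  rw [div_sqrt_mul_eq_sqrt_div hv0.le] at hP
  rw [mul_comm v0, div_sqrt_mul_eq_sqrt_div hv12.le] at hQ
  have hpq : √(v0 / v12) * √(v12 / v0) = 1 := by
    rw [← sqrt_mul (by positivity), div_mul_div_comm, mul_comm v0, div_self (by positivity),
      sqrt_one]
  have hK : ((20 + 5 * √70) * v6) ^ 3 ≤
      (v0 - 10 * v6 * √(v0 / v12) - |v1| * t1 * v0) *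
        (v12 - 10 * v6 * √(v12 / v0) - |v11| * t2 * v12) *
        ((√70 - 8) / 2 * v6 - |v1| * (5 / (t1 * v0)) ^ 5 - |v11| * (5 / (t2 * v12)) ^ 5) := by
    linarith
  have hsextic := sextic_nonneg (by linarith) (by linarith) (by linarith) hv6.le
    (sqrt_nonneg _) (sqrt_nonneg _) hpq hK x1 x2 x3
  have hA := (abs_le.mp (abs_six_mul_mul_pow_five_mul_le (mul_pos ht1 hv0) v1 x1 x2)).1
  have hB := (abs_le.mp (abs_six_mul_mul_pow_five_mul_le (mul_pos ht2 hv12) v11 x3 x2)).1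
  linarith
end

section
/- Let $k \ge 2$, $m = 2k$. There do not exist $r \in \mathbb{N}$ and real numbers $a_1, b_1, \ldots, a_r, b_r$ such that for all real $x_1, x_2$: $x_1^m - \sum_{j=1}^{k-1} x_1^{m-2j} x_2^{2j} + x_2^m = \sum_{p=1}^r (a_p x_1 + b_p x_2)^m$. -/
/-!
Evaluating the form at `(1, 0)` and `(1, ±1/2)` is a discrete second difference in `x₂`.
For a sum of even powers of linear forms this difference is nonnegative, because `y ↦ y ^ m` is
convex; for the given form it equals `2 (1/2)^m - 2 ∑ⱼ (1/2)^(2j) < 0`.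
-/

open Finset

theorem Even.two_mul_pow_le_add_pow_add_sub_pow {n : ℕ} (hn : Even n) (a c : ℝ) :
    2 * a ^ n ≤ (a + c) ^ n + (a - c) ^ n := by
  rcases Nat.eq_zero_or_pos n with rfl | hn0
  · norm_num
  have h := hn.add_pow_le (a := a + c) (b := a - c)
  rw [show a + c + (a - c) = 2 * a by ring, mul_pow,
    show (2 : ℝ) ^ n = 2 ^ (n - 1) * 2 by rw [← pow_succ, Nat.sub_add_cancel hn0], mul_assoc] at h
  exact le_of_mul_le_mul_left h (by positivity)

theorem two_mul_sum_pow_le_sum_pow_add_sum_pow {ι : Type*} (s : Finset ι) {n : ℕ} (hn : Even n)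
    (a b : ι → ℝ) (x y : ℝ) :
    2 * ∑ p ∈ s, (a p * x + b p * 0) ^ n ≤
      ∑ p ∈ s, (a p * x + b p * y) ^ n + ∑ p ∈ s, (a p * x + b p * -y) ^ n := by
  rw [mul_sum, ← sum_add_distrib]
  refine sum_le_sum fun p _ => ?_
  simpa [sub_eq_add_neg] using hn.two_mul_pow_le_add_pow_add_sub_pow (a p * x) (b p * y)

theorem pow_lt_sum_Icc_pow {t : ℝ} (ht₀ : 0 < t) (ht₁ : t < 1) {k : ℕ} (hk : 2 ≤ k) :
    t ^ (2 * k) < ∑ j ∈ Icc 1 (k - 1), t ^ (2 * j) :=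
  calc t ^ (2 * k) < t ^ (2 * (k - 1)) := pow_lt_pow_right_of_lt_one₀ ht₀ ht₁ (by omega)
    _ ≤ ∑ j ∈ Icc 1 (k - 1), t ^ (2 * j) :=
      single_le_sum (f := fun j => t ^ (2 * j)) (fun _ _ => by positivity)
        (mem_Icc.mpr ⟨by omega, le_rfl⟩)

theorem stmt_13 (k : ℕ) (hk : 2 ≤ k) :
    ¬ ∃ (r : ℕ) (a b : Fin r → ℝ),
      ∀ x1 x2 : ℝ,
        x1 ^ (2 * k) - (∑ j ∈ Finset.Icc 1 (k - 1), x1 ^ (2 * k - 2 * j) * x2 ^ (2 * j)) +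
            x2 ^ (2 * k) =
          ∑ p, (a p * x1 + b p * x2) ^ (2 * k) := by
  rintro ⟨r, a, b, h⟩
  have key := two_mul_sum_pow_le_sum_pow_add_sum_pow univ (even_two_mul k) a b 1 (1 / 2)
  rw [← h, ← h, ← h] at key
  have hzero : ∑ j ∈ Icc 1 (k - 1), (0 : ℝ) ^ (2 * j) = 0 :=
    sum_eq_zero fun j hj => zero_pow (by simp at hj; omega)
  simp only [one_pow, one_mul, (even_two_mul _).neg_pow, hzero,
    zero_pow (show 2 * k ≠ 0 by omega)] at key
  linarith [pow_lt_sum_Icc_pow (t := 1 / 2) (by norm_num) (by norm_num) hk]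
end

section
/- Let $n$ be odd, $m \ge 2$, and consider the quadratic form $g(y) = v_0 y_1^2 + v_{(n-1)m} y_{N}^2 + v_{M}\big( y_{M/2+1}^2 + \sum_{i \ne j,\ i+j = M+2} y_i y_j \big)$ in $N = ((n-1)m+2)/2$ variables, where $M = (n-1)m/2$, with $v_0, v_M, v_{(n-1)m} \ge 0$. If $v_M > 0$ and $M \ge 4$, then $g$ takes a negative value; hence the associated Hankel matrix is not positive semi-definite. -/
open Finset

/-- Off the diagonal, a vector supported on `{a, b}` with `a + b = K` meets the anti-diagonal
`i + j = K` only at `(a, b)` and `(b, a)`. -/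
theorem sum_offDiag_antidiagonal_eq_of_support_pair {R : Type*} [CommSemiring R]
    {s : Finset ℕ} {y : ℕ → R} {a b K : ℕ} (ha : a ∈ s) (hb : b ∈ s) (hab : a ≠ b)
    (hK : a + b = K) (hy : ∀ c, c ≠ a → c ≠ b → y c = 0) :
    ∑ i ∈ s, ∑ j ∈ s, (if i ≠ j ∧ i + j = K then y i * y j else 0) = 2 * y a * y b := by
  have row_a : ∑ j ∈ s, (if a ≠ j ∧ a + j = K then y a * y j else 0) = y a * y b := by
    rw [sum_eq_single_of_mem b hb fun j _ hjb => if_neg fun h => hjb (by omega)]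
    exact if_pos ⟨hab, hK⟩
  have row_b : ∑ j ∈ s, (if b ≠ j ∧ b + j = K then y b * y j else 0) = y b * y a := by
    rw [sum_eq_single_of_mem a ha fun j _ hja => if_neg fun h => hja (by omega)]
    exact if_pos ⟨hab.symm, by omega⟩
  rw [sum_eq_add_of_mem a b ha hb hab fun c _ ⟨hca, hcb⟩ =>
    sum_eq_zero fun j _ => by simp [hy c hca hcb], row_a, row_b]
  ring

theorem stmt_16_general (n m : ℕ)
    (v0 vM vnm : ℝ) (hvM : 0 < vM)
    (M N : ℕ) (hM : M = (n - 1) * m / 2) (hN : N = ((n - 1) * m + 2) / 2)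
    (hM4 : 4 ≤ M) :
    ∃ y : ℕ → ℝ,
      v0 * (y 1) ^ 2 + vnm * (y N) ^ 2 +
        vM * ((y (M / 2 + 1)) ^ 2 +
          ∑ i ∈ Finset.Icc 1 N, ∑ j ∈ Finset.Icc 1 N,
            if i ≠ j ∧ i + j = M + 2 then y i * y j else 0) < 0 := by
  have hNM : N = M + 1 := by omega
  set y : ℕ → ℝ := Pi.single 2 1 - Pi.single M 1
  have hy : ∀ c, c ≠ 2 → c ≠ M → y c = 0 := fun c h2 hM => by simp [y, h2, hM]
  have hcross : ∑ i ∈ Icc 1 N, ∑ j ∈ Icc 1 N,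
      (if i ≠ j ∧ i + j = M + 2 then y i * y j else 0) = -2 := by
    rw [sum_offDiag_antidiagonal_eq_of_support_pair (mem_Icc.2 ⟨by omega, by omega⟩)
      (mem_Icc.2 ⟨by omega, by omega⟩) (by omega) (by omega) hy]
    simp [y, show M ≠ 2 by omega]
  refine ⟨y, ?_⟩
  rw [hcross, hy 1 (by omega) (by omega), hy N (by omega) (by omega),
    hy (M / 2 + 1) (by omega) (by omega)]
  linarith

theorem stmt_16 (n m : ℕ) (hn : Odd n) (hm : 2 ≤ m)
    (v0 vM vnm : ℝ) (hv0 : 0 ≤ v0) (hvM : 0 < vM) (hvnm : 0 ≤ vnm)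
    (M N : ℕ) (hM : M = (n - 1) * m / 2) (hN : N = ((n - 1) * m + 2) / 2)
    (hM4 : 4 ≤ M) :
    ∃ y : ℕ → ℝ,
      v0 * (y 1) ^ 2 + vnm * (y N) ^ 2 +
        vM * ((y (M / 2 + 1)) ^ 2 +
          ∑ i ∈ Finset.Icc 1 N, ∑ j ∈ Finset.Icc 1 N,
            if i ≠ j ∧ i + j = M + 2 then y i * y j else 0) < 0 :=
  stmt_16_general n m v0 vM vnm hvM M N hM hN hM4
end

section
/- Let $v_0, v_6, v_{12} \ge 0$ with $\sqrt{v_0 v_{12}} \ge (560 + 70\sqrt{70}) v_6$ and $v_6 > 0$ (hence $v_0, v_{12} > 0$). Then for all real $x_1, x_2, x_3$: $v_0 x_1^6 + v_6(x_2^6 + 30 x_1 x_2^4 x_3 + 90 x_1^2 x_2^2 x_3^2 + 20 x_1^3 x_3^3) + v_{12} x_3^6 \ge 10 v_6 \big( (v_0/v_{12})^{1/4} x_1^3 + (v_{12}/v_0)^{1/4} x_3^3 \big)^2 + v_6 \big( \sqrt{\tfrac{10 - \sqrt{70}}{2}} x_2^3 + \sqrt{150 + 15\sqrt{70}}\, x_1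 x_2 x_3 \big)^2$. -/
lemma amgm_aux_stmt19 (A B a b : ℝ) (hAB : A * B = 1) :
    A ^ 2 * a ^ 6 + B ^ 2 * b ^ 6 ≥ 2 * (a * b) ^ 3 := by
  have key : A ^ 2 * a ^ 6 + B ^ 2 * b ^ 6 - 2 * (a * b) ^ 3 = (A * a ^ 3 - B * b ^ 3) ^ 2 := by
    linear_combination 2 * a ^ 3 * b ^ 3 * hAB
  linarith only [sq_nonneg (A * a ^ 3 - B * b ^ 3), key]

set_option maxHeartbeats 1000000 in
theorem stmt_19 (v0 v6 v12 : ℝ) (hv0 : 0 ≤ v0) (hv12 : 0 ≤ v12) (hv6 : 0 < v6)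
    (h : Real.sqrt (v0 * v12) ≥ (560 + 70 * Real.sqrt 70) * v6) :
    ∀ x1 x2 x3 : ℝ,
      v0 * x1 ^ 6 +
          v6 * (x2 ^ 6 + 30 * x1 * x2 ^ 4 * x3 + 90 * x1 ^ 2 * x2 ^ 2 * x3 ^ 2 +
            20 * x1 ^ 3 * x3 ^ 3) + v12 * x3 ^ 6 ≥
        10 * v6 * ((v0 / v12) ^ ((1 : ℝ) / 4) * x1 ^ 3 + (v12 / v0) ^ ((1 : ℝ) / 4) * x3 ^ 3) ^ 2 +
          v6 * (Real.sqrt ((10 - Real.sqrt 70) / 2) * x2 ^ 3 +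
            Real.sqrt (150 + 15 * Real.sqrt 70) * x1 * x2 * x3) ^ 2 := by
  intro x1 x2 x3
  set r := Real.sqrt 70 with hrdef
  have hr0 : 0 ≤ r := Real.sqrt_nonneg 70
  have hr2 : r ^ 2 = 70 := Real.sq_sqrt (by norm_num)
  clear_value r
  have hr8 : 8 < r := by nlinarith [hr0, hr2, sq_nonneg (r - 8)]
  have hr10 : r < 10 := by nlinarith [hr0, hr2, sq_nonneg (r - 10)]
  set s := Real.sqrt (v0 * v12) with hsdef
  have hs0 : 0 ≤ s := Real.sqrt_nonneg _
  have hs2 : s ^ 2 = v0 * v12 := Real.sq_sqrt (mul_nonneg hv0 hv12)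
  have hspos : (0:ℝ) < s := lt_of_lt_of_le (mul_pos (by linarith) hv6) h
  have hprod : 0 < v0 * v12 := hs2 ▸ pow_pos hspos 2
  have hv0pos : 0 < v0 := by
    rcases hv0.lt_or_eq with h' | h'
    · exact h'
    · exfalso; rw [← h'] at hprod; simp at hprod
  have hv12pos : 0 < v12 := by
    rcases hv12.lt_or_eq with h' | h'
    · exact h'
    · exfalso; rw [← h'] at hprod; simp at hprod
  set A := (v0 / v12) ^ ((1 : ℝ) / 4) with hAdef
  set B := (v12 / v0) ^ ((1 : ℝ) / 4) with hBdef
  have hA0 : 0 ≤ A := Real.rpow_nonneg (div_nonneg hv0 hv12) _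
  have hB0 : 0 ≤ B := Real.rpow_nonneg (div_nonneg hv12 hv0) _
  have hA4 : A ^ 4 = v0 / v12 := by
    rw [hAdef, ← Real.rpow_natCast ((v0 / v12) ^ ((1:ℝ)/4)) 4,
      ← Real.rpow_mul (div_nonneg hv0 hv12)]
    norm_num
  have hB4 : B ^ 4 = v12 / v0 := by
    rw [hBdef, ← Real.rpow_natCast ((v12 / v0) ^ ((1:ℝ)/4)) 4,
      ← Real.rpow_mul (div_nonneg hv12 hv0)]
    norm_num
  have hAB : A * B = 1 := by
    rw [hAdef, hBdef, ← Real.mul_rpow (div_nonneg hv0 hv12) (div_nonneg hv12 hv0),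
      show v0 / v12 * (v12 / v0) = 1 by field_simp]
    exact Real.one_rpow _
  have hA4v : A ^ 4 * v12 = v0 := by rw [hA4]; field_simp
  have hB4v : B ^ 4 * v0 = v12 := by rw [hB4]; field_simp
  clear_value A B
  have hAs : A ^ 2 * v12 = s := by
    have h1 : v0 * v12 = (A ^ 2 * v12) ^ 2 := by rw [← hA4v]; ring
    rw [hsdef, h1, Real.sqrt_sq (mul_nonneg (by positivity) hv12)]
  have hBs : B ^ 2 * v0 = s := by
    have h1 : v0 * v12 = (B ^ 2 * v0) ^ 2 := by rw [← hB4v]; ring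
    rw [hsdef, h1, Real.sqrt_sq (mul_nonneg (by positivity) hv0)]
  clear_value s
  have hv0s : v0 = A ^ 2 * s := by rw [← hAs, ← hA4v]; ring
  have hv12s : v12 = B ^ 2 * s := by rw [← hBs, ← hB4v]; ring
  set u := Real.sqrt ((10 - r) / 2) with hudef
  set w := Real.sqrt (150 + 15 * r) with hwdef
  have hu2 : u ^ 2 = (10 - r) / 2 := Real.sq_sqrt (by linarith)
  have hw2 : w ^ 2 = 150 + 15 * r := Real.sq_sqrt (by linarith)
  have hu0 : 0 ≤ u := Real.sqrt_nonneg _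
  have hw0 : 0 ≤ w := Real.sqrt_nonneg _
  have huw : u * w = 15 := by
    rw [hudef, hwdef, ← Real.sqrt_mul (by linarith)]
    have h225 : (10 - r) / 2 * (150 + 15 * r) = 225 := by linear_combination (-15/2 : ℝ) * hr2
    rw [h225, show (225:ℝ) = 15 ^ 2 by norm_num, Real.sqrt_sq (by norm_num)]
  clear_value u w
  -- abbreviations
  obtain ⟨t, htdef⟩ : ∃ t, t = |x1 * x3| := ⟨_, rfl⟩
  have ht0 : 0 ≤ t := htdef ▸ abs_nonneg _
  have ht2 : t ^ 2 = x1 ^ 2 * x3 ^ 2 := by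
    rw [htdef, ← mul_pow]; exact sq_abs _
  -- AM-GM part
  have hamgm : A ^ 2 * x1 ^ 6 + B ^ 2 * x3 ^ 6 ≥ 2 * t ^ 3 := by
    have H := amgm_aux_stmt19 A B |x1| |x3| hAB
    have h1 : |x1| ^ 6 = x1 ^ 6 := by rw [← abs_pow, abs_of_nonneg (by positivity)]
    have h3 : |x3| ^ 6 = x3 ^ 6 := by rw [← abs_pow, abs_of_nonneg (by positivity)]
    have h2 : |x1| * |x3| = t := by rw [htdef, abs_mul]
    rw [h1, h3, h2] at H
    exact H
  obtain ⟨K, hKdef⟩ : ∃ K, K = s - 10 * v6 := ⟨_, rfl⟩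
  have hK : K ≥ (550 + 70 * r) * v6 := by rw [hKdef]; linarith [h]
  have hKpos : 0 < K := lt_of_lt_of_le (mul_pos (by linarith) hv6) hK
  obtain ⟨m, hmdef⟩ : ∃ m, m = x2 ^ 2 := ⟨_, rfl⟩
  have hm0 : 0 ≤ m := hmdef ▸ sq_nonneg _
  -- key cubic inequality
  have hkey : K * (2 * t ^ 3) + v6 * ((r - 8) / 2 * m ^ 3 - (60 + 15 * r) * t ^ 2 * m) ≥ 0 := by
    have h1 : (K - (550 + 70 * r) * v6) * (2 * t ^ 3) ≥ 0 :=
      mul_nonneg (by linarith) (by positivity)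
    have h2 : v6 * ((r - 8) / 2) * (m - (10 + r) * t) ^ 2 * (m + 2 * (10 + r) * t) ≥ 0 := by
      have hb : (0:ℝ) ≤ (r - 8) / 2 := by linarith
      have hc : (0:ℝ) ≤ m + 2 * (10 + r) * t :=
        add_nonneg hm0 (mul_nonneg (by linarith) ht0)
      positivity
    have e : (550 + 70 * r) * v6 * (2 * t ^ 3) +
          v6 * ((r - 8) / 2 * m ^ 3 - (60 + 15 * r) * t ^ 2 * m) =
        v6 * ((r - 8) / 2) * (m - (10 + r) * t) ^ 2 * (m + 2 * (10 + r) * t) := by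
      linear_combination (v6 * ((-r ^ 2 - 22 * r - 130) * t ^ 3 +
        (3 / 2) * (r + 12) * t ^ 2 * m)) * hr2
    linarith only [h1, h2, e]
  -- main decomposition identity
  have hident :
      v0 * x1 ^ 6 +
          v6 * (x2 ^ 6 + 30 * x1 * x2 ^ 4 * x3 + 90 * x1 ^ 2 * x2 ^ 2 * x3 ^ 2 +
            20 * x1 ^ 3 * x3 ^ 3) + v12 * x3 ^ 6 -
        (10 * v6 * (A * x1 ^ 3 + B * x3 ^ 3) ^ 2 +
          v6 * (u * x2 ^ 3 + w * x1 * x2 * x3) ^ 2) =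
      K * (A ^ 2 * x1 ^ 6 + B ^ 2 * x3 ^ 6) +
        v6 * ((r - 8) / 2 * (x2 ^ 2) ^ 3 - (60 + 15 * r) * (x1 ^ 2 * x3 ^ 2) * x2 ^ 2) := by
    rw [hKdef]
    linear_combination x1 ^ 6 * hv0s + x3 ^ 6 * hv12s - 20 * v6 * x1 ^ 3 * x3 ^ 3 * hAB -
      v6 * x2 ^ 6 * hu2 - v6 * x1 ^ 2 * x2 ^ 2 * x3 ^ 2 * hw2 -
      2 * v6 * x1 * x2 ^ 4 * x3 * huw
  have hstep : K * (A ^ 2 * x1 ^ 6 + B ^ 2 * x3 ^ 6) ≥ K * (2 * t ^ 3) :=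
    mul_le_mul_of_nonneg_left hamgm hKpos.le
  have hfinal : v0 * x1 ^ 6 +
          v6 * (x2 ^ 6 + 30 * x1 * x2 ^ 4 * x3 + 90 * x1 ^ 2 * x2 ^ 2 * x3 ^ 2 +
            20 * x1 ^ 3 * x3 ^ 3) + v12 * x3 ^ 6 -
        (10 * v6 * (A * x1 ^ 3 + B * x3 ^ 3) ^ 2 +
          v6 * (u * x2 ^ 3 + w * x1 * x2 * x3) ^ 2) ≥ 0 := by
    rw [hident]
    have e2 : x1 ^ 2 * x3 ^ 2 = t ^ 2 := ht2.symm
    rw [e2, ← hmdef]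
    linarith only [hkey, hstep]
  linarith only [hfinal]
end
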